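/- There is a positive constant C such that for every positive integer ℓ and every real-valued function f on B_ℓ, the square function satisfies ‖S(f)‖_4 ≤ C · ‖f‖_4. -/

import Mathlib

open Finset

/-- The value `±1 ∈ ℝ` attached to a coordinate of a point of `B_ℓ = {−1,1}^ℓ`,
modelled as `Fin ℓ → Bool`.  `sgn (x j)` is the Rademacher function at `x`. -/
def sgn (b : Bool) : ℝ := if b then 1 else -1

/-- `E_k(f)(x) = 2^{−ℓ+k} Σ_{y ∈ N_k(x)} f(y)`, the average of `f` over
`N_k(x) = {y ∈ B_ℓ : y_j = x_j for all j ≤ k}` (indices `0,…,k−1` in `Fin ℓ`). -/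
noncomputable def condExpB (ℓ k : ℕ) (f : (Fin ℓ → Bool) → ℝ) (x : Fin ℓ → Bool) : ℝ :=
  (2:ℝ) ^ ((k:ℤ) - (ℓ:ℤ)) *
    ∑ y ∈ Finset.univ.filter (fun y : Fin ℓ → Bool => ∀ j : Fin ℓ, (j:ℕ) < k → y j = x j), f y


/-- The square function
`S(f)(x) = (|E_0(f)(x)|² + Σ_{k=1}^ℓ |E_k(f)(x) − E_{k−1}(f)(x)|²)^{1/2}`. -/
noncomputable def sqFn (ℓ : ℕ) (f : (Fin ℓ → Bool) → ℝ) (x : Fin ℓ → Bool) : ℝ :=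
  Real.sqrt (|condExpB ℓ 0 f x| ^ 2 +
    ∑ k ∈ Finset.Icc 1 ℓ, |condExpB ℓ k f x - condExpB ℓ (k - 1) f x| ^ 2)


/-- `‖f‖_p = (2^{−ℓ} Σ_{x ∈ B_ℓ} |f(x)|ᵖ)^{1/p}` for a function `f` on `B_ℓ`. -/
noncomputable def pnorm (ℓ : ℕ) (p : ℝ) (f : (Fin ℓ → Bool) → ℝ) : ℝ :=
  ((2:ℝ) ^ (-(ℓ:ℤ)) * ∑ x : Fin ℓ → Bool, |f x| ^ p) ^ (1 / p)

/-! With `E_k = condExpB ℓ k f` and `d_{k+1} = E_{k+1} - E_k`, the identity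
`E_{k+1}² - E_k² = d_{k+1}² + 2 E_k d_{k+1}` telescopes to `S(f)² = f² - 2M` with
`M = Σ_k E_k d_{k+1}`. Flipping the coordinate `k` fixes `E_k` and negates `d_{k+1}`, so the
odd terms average out: the summands of `M` are orthogonal, and expanding
`E_{k+1}⁴ = (E_k + d_{k+1})⁴` gives `6 ‖E_k d_{k+1}‖₂² ≤ ‖E_{k+1}‖₄⁴ - ‖E_k‖₄⁴`.
Hence `6 ‖M‖₂² ≤ ‖f‖₄⁴`, and `S⁴ = (f² - 2M)² ≤ 2f⁴ + 8M²` yields `‖S(f)‖₄⁴ ≤ (10/3) ‖f‖₄⁴`. -/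

lemma Fintype.sum_eq_zero_of_comp_perm_eq_neg {α : Type*} [Fintype α] (σ : Equiv.Perm α)
    {F : α → ℝ} (hF : ∀ x, F (σ x) = -F x) : ∑ x, F x = 0 := by
  have h := Equiv.sum_comp σ F
  simp only [hF, sum_neg_distrib] at h
  linarith

lemma Fintype.six_mul_sum_sq_mul_sq_le {α : Type*} [Fintype α] (σ : Equiv.Perm α)
    {a b : α → ℝ} (ha : ∀ x, a (σ x) = a x) (hb : ∀ x, b (σ x) = -b x) :
    6 * ∑ x, a x ^ 2 * b x ^ 2 ≤ ∑ x, (a x + b x) ^ 4 - ∑ x, a x ^ 4 := by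
  have hodd : ∑ x, (4 * a x ^ 3 * b x + 4 * a x * b x ^ 3) = 0 :=
    sum_eq_zero_of_comp_perm_eq_neg σ fun x => by rw [ha, hb]; ring
  have hb4 : 0 ≤ ∑ x, b x ^ 4 := Finset.sum_nonneg fun x _ => by positivity
  have hexp : ∑ x, (a x + b x) ^ 4 - ∑ x, a x ^ 4 - 6 * ∑ x, a x ^ 2 * b x ^ 2
      = ∑ x, (4 * a x ^ 3 * b x + 4 * a x * b x ^ 3) + ∑ x, b x ^ 4 := by
    simp only [mul_sum, ← sum_sub_distrib, ← sum_add_distrib]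
    exact Finset.sum_congr rfl fun x _ => by ring
  linarith

lemma Fintype.sum_sq_sum_eq_of_orthogonal {ι α : Type*} [Fintype α] (s : Finset ι)
    (u : ι → α → ℝ) (h : ∀ i ∈ s, ∀ j ∈ s, i ≠ j → ∑ x, u i x * u j x = 0) :
    ∑ x, (∑ i ∈ s, u i x) ^ 2 = ∑ i ∈ s, ∑ x, u i x ^ 2 := by
  simp only [sq, Finset.sum_mul_sum]
  rw [sum_comm]
  refine Finset.sum_congr rfl fun i hi => ?_
  rw [sum_comm, Finset.sum_eq_single i (fun j hj hji => h i hi j hj hji.symm) (absurd hi)]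

lemma Finset.sum_Icc_one_eq_sum_fin {M : Type*} [AddCommMonoid M] (g : ℕ → M) (n : ℕ) :
    ∑ k ∈ Icc 1 n, g k = ∑ i : Fin n, g (i + 1) := by
  rw [Fin.sum_univ_eq_sum_range (fun i => g (i + 1)), range_eq_Ico, sum_Ico_add']
  rfl

section Cube

variable {ℓ : ℕ}

def flipAt (i : Fin ℓ) (x : Fin ℓ → Bool) : Fin ℓ → Bool :=
  Function.update x i (!x i)

lemma flipAt_apply_of_ne {i j : Fin ℓ} (x : Fin ℓ → Bool) (h : j ≠ i) :
    flipAt i x j = x j :=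
  Function.update_of_ne h _ _

@[simp]
lemma flipAt_apply_self (i : Fin ℓ) (x : Fin ℓ → Bool) : flipAt i x i = !x i :=
  Function.update_self _ _ _

lemma flipAt_involutive (i : Fin ℓ) : Function.Involutive (flipAt i) := fun x => by
  simp [flipAt]

def cylinder (k : ℕ) (x : Fin ℓ → Bool) : Finset (Fin ℓ → Bool) :=
  univ.filter fun y => ∀ j : Fin ℓ, (j : ℕ) < k → y j = x j

lemma forall_val_lt_succ_iff {i : Fin ℓ} {P : Fin ℓ → Prop} :
    (∀ j : Fin ℓ, (j : ℕ) < i + 1 → P j) ↔ (∀ j : Fin ℓ, (j : ℕ) < i → P j) ∧ P i := by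
  refine ⟨fun h => ⟨fun j hj => h j (by omega), h i (by omega)⟩, fun ⟨hlt, hi⟩ j hj => ?_⟩
  rcases Nat.lt_succ_iff_lt_or_eq.mp hj with hj | hj
  · exact hlt j hj
  · exact Fin.ext hj ▸ hi

lemma cylinder_succ (i : Fin ℓ) (x : Fin ℓ → Bool) :
    cylinder (i + 1) x = (cylinder i x).filter fun y => y i = x i := by
  ext y
  simp only [cylinder, mem_filter, mem_univ, true_and, forall_val_lt_succ_iff]

lemma cylinder_succ_flipAt (i : Fin ℓ) (x : Fin ℓ → Bool) :
    cylinder (i + 1) (flipAt i x) = (cylinder i x).filter fun y => ¬y i = x i := by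
  ext y
  simp only [cylinder, mem_filter, mem_univ, true_and, forall_val_lt_succ_iff, flipAt_apply_self]
  refine and_congr (forall₂_congr fun j hj => ?_) (by cases y i <;> cases x i <;> simp)
  rw [flipAt_apply_of_ne x (fun h => (h ▸ hj).false)]

variable (f : (Fin ℓ → Bool) → ℝ)

lemma condExpB_eq (k : ℕ) (x : Fin ℓ → Bool) :
    condExpB ℓ k f x = 2 ^ ((k : ℤ) - ℓ) * ∑ y ∈ cylinder k x, f y :=
  rfl

lemma condExpB_congr {k : ℕ} {x x' : Fin ℓ → Bool}
    (h : ∀ j : Fin ℓ, (j : ℕ) < k → x j = x' j) : condExpB ℓ k f x = condExpB ℓ k f x' := by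
  simp only [condExpB_eq, cylinder]
  congr 2
  exact filter_congr fun y _ => forall₂_congr fun j hj => by rw [h j hj]

lemma condExpB_flipAt_of_le {k : ℕ} {i : Fin ℓ} (hk : k ≤ i) (x : Fin ℓ → Bool) :
    condExpB ℓ k f (flipAt i x) = condExpB ℓ k f x :=
  condExpB_congr f fun j hj => flipAt_apply_of_ne x (fun h => by subst h; omega)

lemma condExpB_top : condExpB ℓ ℓ f = f := by
  funext x
  have : cylinder ℓ x = {x} := by
    ext y
    simp only [cylinder, mem_filter, mem_univ, true_and, mem_singleton]
    exact ⟨fun h => funext fun j => h j j.isLt, fun h j _ => h ▸ rfl⟩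
  simp [condExpB_eq, this]

lemma condExpB_succ_add_flipAt (i : Fin ℓ) (x : Fin ℓ → Bool) :
    condExpB ℓ (i + 1) f x + condExpB ℓ (i + 1) f (flipAt i x) = 2 * condExpB ℓ i f x := by
  have hpow : (2 : ℝ) ^ (((i + 1 : ℕ) : ℤ) - ℓ) = 2 * 2 ^ (((i : ℕ) : ℤ) - ℓ) := by
    rw [← zpow_one_add₀ two_ne_zero]
    push_cast
    ring_nf
  rw [condExpB_eq, condExpB_eq, condExpB_eq, cylinder_succ, cylinder_succ_flipAt, hpow,
    ← mul_add, sum_filter_add_sum_filter_not, mul_assoc]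

noncomputable def martingaleDiff (i : ℕ) (x : Fin ℓ → Bool) : ℝ :=
  condExpB ℓ (i + 1) f x - condExpB ℓ i f x

lemma martingaleDiff_flipAt (i : Fin ℓ) (x : Fin ℓ → Bool) :
    martingaleDiff f i (flipAt i x) = -martingaleDiff f i x := by
  have := condExpB_succ_add_flipAt f i x
  rw [martingaleDiff, martingaleDiff, condExpB_flipAt_of_le f le_rfl]
  linarith

lemma martingaleDiff_flipAt_of_lt {i : ℕ} {j : Fin ℓ} (h : i < j) (x : Fin ℓ → Bool) :
    martingaleDiff f i (flipAt j x) = martingaleDiff f i x := by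
  rw [martingaleDiff, martingaleDiff, condExpB_flipAt_of_le f h,
    condExpB_flipAt_of_le f h.le]

noncomputable def martingaleTransform (x : Fin ℓ → Bool) : ℝ :=
  ∑ i : Fin ℓ, condExpB ℓ i f x * martingaleDiff f i x

lemma sum_martingaleTransform_sq :
    ∑ x, martingaleTransform f x ^ 2
      = ∑ i : Fin ℓ, ∑ x, (condExpB ℓ i f x * martingaleDiff f i x) ^ 2 := by
  refine Fintype.sum_sq_sum_eq_of_orthogonal _ _ fun i _ j _ hij => ?_
  wlog hlt : i < j generalizing i j
  · simpa only [mul_comm] using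
      this j (mem_univ _) i (mem_univ _) hij.symm (lt_of_le_of_ne (not_lt.mp hlt) hij.symm)
  refine Fintype.sum_eq_zero_of_comp_perm_eq_neg (flipAt_involutive j).toPerm fun x => ?_
  simp only [Function.Involutive.coe_toPerm, martingaleDiff_flipAt,
    condExpB_flipAt_of_le f hlt.le, condExpB_flipAt_of_le f (le_refl (j : ℕ)),
    martingaleDiff_flipAt_of_lt f hlt]
  ring

lemma six_mul_sum_sq_condExpB_mul_martingaleDiff_le (i : Fin ℓ) :
    6 * ∑ x, (condExpB ℓ i f x * martingaleDiff f i x) ^ 2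
      ≤ ∑ x, condExpB ℓ (i + 1) f x ^ 4 - ∑ x, condExpB ℓ i f x ^ 4 := by
  have h := Fintype.six_mul_sum_sq_mul_sq_le (flipAt_involutive i).toPerm
    (a := fun x => condExpB ℓ i f x) (b := martingaleDiff f i)
    (condExpB_flipAt_of_le f le_rfl) (martingaleDiff_flipAt f i)
  simpa only [mul_pow, martingaleDiff, add_sub_cancel] using h

lemma six_mul_sum_martingaleTransform_sq_le :
    6 * ∑ x, martingaleTransform f x ^ 2 ≤ ∑ x, f x ^ 4 := by
  set g : ℕ → ℝ := fun k => ∑ x, condExpB ℓ k f x ^ 4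
  have hg0 : 0 ≤ g 0 := sum_nonneg fun x _ => by positivity
  calc 6 * ∑ x, martingaleTransform f x ^ 2
      = ∑ i : Fin ℓ, 6 * ∑ x, (condExpB ℓ i f x * martingaleDiff f i x) ^ 2 := by
        rw [sum_martingaleTransform_sq, mul_sum]
    _ ≤ ∑ i : Fin ℓ, (g (i + 1) - g i) :=
        sum_le_sum fun i _ => six_mul_sum_sq_condExpB_mul_martingaleDiff_le f i
    _ = g ℓ - g 0 := by rw [Fin.sum_univ_eq_sum_range (fun i => g (i + 1) - g i), sum_range_sub]
    _ ≤ ∑ x, f x ^ 4 := by simp only [g, condExpB_top]; linarith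

lemma sqFn_sq (x : Fin ℓ → Bool) : sqFn ℓ f x ^ 2 = f x ^ 2 - 2 * martingaleTransform f x := by
  have htel : ∑ i : Fin ℓ, (condExpB ℓ (i + 1) f x ^ 2 - condExpB ℓ i f x ^ 2)
      = f x ^ 2 - condExpB ℓ 0 f x ^ 2 := by
    rw [Fin.sum_univ_eq_sum_range (fun i => condExpB ℓ (i + 1) f x ^ 2 - condExpB ℓ i f x ^ 2),
      Finset.sum_range_sub (fun i => condExpB ℓ i f x ^ 2), condExpB_top]
  have hstep : ∀ i : ℕ, condExpB ℓ (i + 1) f x ^ 2 - condExpB ℓ i f x ^ 2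
      = (condExpB ℓ (i + 1) f x - condExpB ℓ i f x) ^ 2
        + 2 * (condExpB ℓ i f x * martingaleDiff f i x) := fun i => by
    rw [martingaleDiff]
    ring
  simp only [hstep, sum_add_distrib, ← mul_sum] at htel
  rw [sqFn, Real.sq_sqrt (by positivity), sum_Icc_one_eq_sum_fin]
  simp only [sq_abs, Nat.add_sub_cancel, martingaleTransform]
  linarith

lemma sum_sqFn_pow_four_le : ∑ x, sqFn ℓ f x ^ 4 ≤ 10 / 3 * ∑ x, f x ^ 4 := by
  have hM := six_mul_sum_martingaleTransform_sq_le f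
  have hpt : ∀ x, sqFn ℓ f x ^ 4 ≤ 2 * f x ^ 4 + 8 * martingaleTransform f x ^ 2 := fun x => by
    rw [show sqFn ℓ f x ^ 4 = (sqFn ℓ f x ^ 2) ^ 2 by ring, sqFn_sq]
    nlinarith [sq_nonneg (f x ^ 2 + 2 * martingaleTransform f x)]
  calc ∑ x, sqFn ℓ f x ^ 4 ≤ ∑ x, (2 * f x ^ 4 + 8 * martingaleTransform f x ^ 2) :=
        sum_le_sum fun x _ => hpt x
    _ = 2 * ∑ x, f x ^ 4 + 8 * ∑ x, martingaleTransform f x ^ 2 := by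
        rw [sum_add_distrib, mul_sum, mul_sum]
    _ ≤ 10 / 3 * ∑ x, f x ^ 4 := by linarith

end Cube

lemma pnorm_le_of_sum_le {ℓ : ℕ} {p C : ℝ} (hp : 0 < p) (hC : 0 ≤ C)
    {f g : (Fin ℓ → Bool) → ℝ} (h : ∑ x, |g x| ^ p ≤ C ^ p * ∑ x, |f x| ^ p) :
    pnorm ℓ p g ≤ C * pnorm ℓ p f := by
  have hP : (0 : ℝ) < 2 ^ (-(ℓ : ℤ)) := by positivity
  have hf : 0 ≤ 2 ^ (-(ℓ : ℤ)) * ∑ x, |f x| ^ p := by positivity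
  calc pnorm ℓ p g ≤ (C ^ p * (2 ^ (-(ℓ : ℤ)) * ∑ x, |f x| ^ p)) ^ (1 / p) := by
        refine Real.rpow_le_rpow (by positivity) ?_ (by positivity)
        rw [mul_left_comm]
        exact mul_le_mul_of_nonneg_left h hP.le
    _ = C * pnorm ℓ p f := by
        rw [Real.mul_rpow (by positivity) hf, one_div, Real.rpow_rpow_inv hC hp.ne', pnorm,
          one_div]

/-- there is `C > 0` such that `‖S(f)‖_4 ≤ C ‖f‖_4` for every positive
integer `ℓ` and every function `f` on `B_ℓ`. -/
theorem stmt19 :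
    ∃ C : ℝ, 0 < C ∧ ∀ (ℓ : ℕ), 0 < ℓ → ∀ f : (Fin ℓ → Bool) → ℝ,
      pnorm ℓ 4 (sqFn ℓ f) ≤ C * pnorm ℓ 4 f := by
  refine ⟨2, two_pos, fun ℓ _ f => pnorm_le_of_sum_le four_pos zero_le_two ?_⟩
  have habs : ∀ g : (Fin ℓ → Bool) → ℝ, ∑ x, |g x| ^ (4 : ℝ) = ∑ x, g x ^ 4 := fun g =>
    sum_congr rfl fun x _ => by rw [← Even.pow_abs (by decide : Even 4) (g x)]; norm_cast
  have hf : 0 ≤ ∑ x, f x ^ 4 := sum_nonneg fun x _ => by positivity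
  rw [habs, habs, show (2 : ℝ) ^ (4 : ℝ) = 16 by norm_num]
  linarith [sum_sqFn_pow_four_le f]
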